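/- Let 𝔛 = (X, {R_i}_{i=0}^d) be a symmetric association scheme of class d with pairwise distinct eigenvalues θ₀,…,θ_d of A₁. Then 𝔛 is a P-polynomial association scheme with respect to A₁ if and only if there exists l ∈ {0,1,…,d} such that for each i ∈ {1,…,d}, ∏_{j=1, j≠i}^d (θ₀ − θ_j)/(θ_i − θ_j) = − Q_i(l). Moreover, if such an l exists, then A_l is the last (d-th) adjacency matrix in the P-polynomial ordering. -/

import Mathlib

open Matrix BigOperators

/-- A symmetric association scheme of class `d` on a finite set `X`, bundled with
its adjacency matrices `A i`, primitive idempotents `E i`, and first and second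
eigenmatrices `P`, `Q` (with `P i j = P_i(j)`, `Q i j = Q_i(j)`). -/
structure AssocScheme (X : Type*) [Fintype X] [DecidableEq X] (d : ℕ) where
  A : Fin (d + 1) → Matrix X X ℝ
  E : Fin (d + 1) → Matrix X X ℝ
  P : Fin (d + 1) → Fin (d + 1) → ℝ
  Q : Fin (d + 1) → Fin (d + 1) → ℝ
  A_entries : ∀ i x y, A i x y = 0 ∨ A i x y = 1
  A_zero : A 0 = 1
  A_ne : ∀ i, A i ≠ 0
  A_sum : ∑ i, A i = Matrix.of fun _ _ => (1 : ℝ)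
  A_symm : ∀ i, (A i)ᵀ = A i
  A_mul : ∀ i j, ∃ p : Fin (d + 1) → ℝ, A i * A j = ∑ k, p k • A k
  E_zero : E 0 = ((Fintype.card X : ℝ))⁻¹ • Matrix.of fun _ _ => (1 : ℝ)
  E_sum : ∑ i, E i = 1
  E_mul : ∀ i j, E i * E j = if i = j then E i else 0
  E_symm : ∀ i, (E i)ᵀ = E i
  A_eq : ∀ i, A i = ∑ j, P i j • E j
  E_eq : ∀ i, E i = ((Fintype.card X : ℝ))⁻¹ • ∑ j, Q i j • A j

namespace AssocScheme

variable {V : Type*} [Fintype V] [DecidableEq V] {d : ℕ} (S : AssocScheme V d)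

/-- The eigenvalues `θ_j = P_1(j)` of the first adjacency matrix. -/
def theta (j : Fin (d + 1)) : ℝ := S.P 1 j

/-- `A j` appears in `M` if `M ∘ A j = α • A j` for some nonzero `α`. -/
def Appears (M : Matrix V V ℝ) (j : Fin (d + 1)) : Prop :=
  ∃ α : ℝ, α ≠ 0 ∧ Matrix.hadamard M (S.A j) = α • S.A j

/-- `N*_h`: indices `j` such that `A j` appears in `A₁^h` but in no lower power. -/
def Nstar (h : ℕ) : Set (Fin (d + 1)) :=
  {j | S.Appears (S.A 1 ^ h) j ∧ ∀ l < h, ¬ S.Appears (S.A 1 ^ l) j}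

/-- `S` is a P-polynomial scheme with respect to `A 1`: there is an ordering
`A 0, A 1, A (ξ 2), …, A (ξ d)` and polynomials `v i` of degree `i` with
`v i (A 1) = A (ξ i)`. -/
def IsPPolyWrtA1 : Prop :=
  ∃ ξ : Equiv.Perm (Fin (d + 1)), ξ 0 = 0 ∧ ξ 1 = 1 ∧
    ∃ v : Fin (d + 1) → Polynomial ℝ,
      ∀ i, (v i).natDegree = (i : ℕ) ∧ Polynomial.aeval (S.A 1) (v i) = S.A (ξ i)

end AssocScheme

/-!
Expanding `p(A₁) = ∑ᵢ p(θᵢ) Eᵢ` in the basis `A_j` shows that the coefficient of `A_l` in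
`p(A₁)` is `|X|⁻¹ ∑ᵢ p(θᵢ) Q_i(l)`. The product in the condition is the value at `θ₀` of the
Lagrange basis polynomial of the nodes `θ₁, …, θ_d`; testing against these polynomials, and using
`Q_0(l) = 1`, shows that the condition on `l` says exactly that `A_l` occurs in no polynomial of
degree `< d` in `A₁`. In a P-polynomial ordering `A_{ξ 0}, …, A_{ξ (d-1)}` span these
polynomials, so `l = ξ d` satisfies it.

Conversely, let the level of a relation `m` be the least `h` such that `A_m` occurs in
`(A₁ + I)^h`, i.e. the distance in the graph `A₁` between points in relation `m`. Every `A_m` is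
a polynomial of degree `≤ d` in `A₁` (interpolate its eigenvalues at the distinct `θᵢ`), so all
levels are `≤ d`, while the condition gives `l` level `d`. Since `A₁ + I` is entrywise
nonnegative, the zero pattern of `(A₁ + I)^(h+1)` depends only on that of `(A₁ + I)^h`, so the
levels that occur have no gaps. Hence the level is a bijection onto `{0, …, d}`, and induction on
the level writes `A_m` as a polynomial of degree exactly its level in `A₁`.
-/

open Polynomial Finset

namespace Lagrange

variable {F ι : Type*} [Field F] [DecidableEq ι]

theorem eval_basis_eq_prod (s : Finset ι) (v : ι → F) (i : ι) (x : F) :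
    (Lagrange.basis s v i).eval x = ∏ j ∈ s.erase i, (x - v j) / (v i - v j) := by
  simp only [Lagrange.basis, eval_prod, basisDivisor, eval_mul, eval_C, eval_sub, eval_X,
    div_eq_inv_mul]

variable [Fintype ι] {v : ι → F} {c : ι → F} {i₀ : ι}

theorem sum_eval_basis_erase_mul (hv : Function.Injective v) (hc : c i₀ = 1) {i : ι}
    (hi : i ≠ i₀) :
    ∑ k, (Lagrange.basis (univ.erase i₀) v i).eval (v k) * c k =
      (Lagrange.basis (univ.erase i₀) v i).eval (v i₀) + c i := by
  have hi' : i ∈ univ.erase i₀ := mem_erase.2 ⟨hi, mem_univ i⟩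
  rw [← add_sum_erase _ _ (mem_univ i₀), hc, mul_one, sum_eq_single_of_mem i hi',
    eval_basis_self hv.injOn hi', one_mul]
  intro k hk hki
  rw [eval_basis_of_ne (Ne.symm hki) hk, zero_mul]

theorem forall_eval_basis_eq_neg_iff (hv : Function.Injective v) (hc : c i₀ = 1) :
    (∀ i ≠ i₀, (Lagrange.basis (univ.erase i₀) v i).eval (v i₀) = -c i) ↔
      ∀ p : F[X], p.degree < #(univ.erase i₀) → ∑ k, p.eval (v k) * c k = 0 := by
  constructor
  · intro h p hp
    have hsum : ∑ k, p.eval (v k) * c k = ∑ i ∈ univ.erase i₀, p.eval (v i) *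
        ∑ k, (Lagrange.basis (univ.erase i₀) v i).eval (v k) * c k := by
      conv_lhs => rw [eq_interpolate (hv.injOn (s := ↑(univ.erase i₀))) hp]
      simp only [interpolate_apply, eval_finsetSum, eval_mul, eval_C, sum_mul, mul_sum, mul_assoc]
      exact sum_comm
    rw [hsum]
    refine sum_eq_zero fun i hi => ?_
    rw [sum_eval_basis_erase_mul hv hc (mem_erase.1 hi).1, h i (mem_erase.1 hi).1, neg_add_cancel,
      mul_zero]
  · intro h i hi
    have hi' : i ∈ univ.erase i₀ := mem_erase.2 ⟨hi, mem_univ i⟩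
    have hdeg : (Lagrange.basis (univ.erase i₀) v i).degree < #(univ.erase i₀) := by
      rw [degree_basis hv.injOn hi', Nat.cast_lt]
      exact Nat.sub_lt (card_pos.2 ⟨i, hi'⟩) one_pos
    have := h _ hdeg
    rw [sum_eval_basis_erase_mul hv hc hi] at this
    linear_combination this

end Lagrange

theorem Polynomial.mem_span_image_of_degree_lt {K : Type*} [Field K] {n : ℕ}
    {v : Fin (n + 1) → K[X]} (hv : ∀ i, (v i).degree = (i : ℕ)) {p : K[X]} (hp : p.degree < n) :
    p ∈ Submodule.span K (v '' {i | (i : ℕ) < n}) := by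
  let seq : Sequence K :=
    ⟨fun k => if h : k < n + 1 then v ⟨k, h⟩ else X ^ k, fun k => by
      split_ifs
      · exact hv _
      · exact degree_X_pow k⟩
  have hspan := seq.span_degreeLT (m := n) fun i _ =>
    isUnit_iff_ne_zero.2 (leadingCoeff_ne_zero.2 (seq.ne_zero i))
  rw [← mem_degreeLT, ← hspan] at hp
  refine Submodule.span_mono ?_ hp
  rintro _ ⟨k, hk : k < n, rfl⟩
  exact ⟨⟨k, by omega⟩, hk, by simp [seq, show k < n + 1 by omega]⟩

namespace Matrix

variable {n R : Type*} [Fintype n] [Ring R] [LinearOrder R] [IsStrictOrderedRing R]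
  {M N : Matrix n n R}

theorem mul_apply_eq_zero_iff_of_nonneg (hM : ∀ i j, 0 ≤ M i j) (hN : ∀ i j, 0 ≤ N i j)
    (i j : n) : (M * N) i j = 0 ↔ ∀ k, M i k = 0 ∨ N k j = 0 := by
  simp only [mul_apply, sum_eq_zero_iff_of_nonneg fun k _ => mul_nonneg (hM i k) (hN k j),
    mem_univ, true_implies, mul_eq_zero]

variable [DecidableEq n]

theorem add_one_pow_apply_ne_zero_iff (hM : ∀ i j, 0 ≤ M i j) (h : ℕ) (i j : n) :
    ((M + 1) ^ h) i j ≠ 0 ↔ ∃ k ≤ h, (M ^ k) i j ≠ 0 := by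
  have hterm : ∀ k ∈ range (h + 1), 0 ≤ (h.choose k : R) * (M ^ k) i j := fun k _ =>
    mul_nonneg (Nat.cast_nonneg _) (pow_apply_nonneg hM k i j)
  have hexp : ((M + 1) ^ h) i j = ∑ k ∈ range (h + 1), (h.choose k : R) * (M ^ k) i j := by
    rw [(Commute.one_right M).add_pow, sum_apply]
    refine sum_congr rfl fun k _ => ?_
    rw [one_pow, mul_one, ← Nat.cast_comm, ← nsmul_eq_mul, smul_apply, nsmul_eq_mul]
  rw [hexp, Ne, sum_eq_zero_iff_of_nonneg hterm]
  simp only [mem_range, Nat.lt_succ_iff, mul_eq_zero, Nat.cast_eq_zero, not_forall, not_or,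
    exists_prop]
  exact exists_congr fun k => and_congr_right fun hk => and_iff_right (Nat.choose_pos hk).ne'

theorem pow_add_apply_eq_zero_iff_of_stable {B : Matrix n n R} (hB : ∀ i j, 0 ≤ B i j) {h : ℕ}
    (hstable : ∀ i j, (B ^ (h + 1)) i j = 0 ↔ (B ^ h) i j = 0) (t : ℕ) (i j : n) :
    (B ^ (h + t)) i j = 0 ↔ (B ^ h) i j = 0 := by
  induction t generalizing j with
  | zero => rfl
  | succ t ih =>
    rw [← add_assoc, pow_succ, mul_apply_eq_zero_iff_of_nonneg (pow_apply_nonneg hB _) hB,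
      ← hstable, pow_succ, mul_apply_eq_zero_iff_of_nonneg (pow_apply_nonneg hB _) hB]
    simp only [ih]

end Matrix

namespace AssocScheme

variable {V : Type*} [Fintype V] [DecidableEq V] {d : ℕ} (S : AssocScheme V d)

theorem A_apply_nonneg (i : Fin (d + 1)) (x y : V) : 0 ≤ S.A i x y := by
  rcases S.A_entries i x y with h | h <;> simp [h]

theorem sum_A_apply (x y : V) : ∑ i, S.A i x y = 1 := by
  simpa [Matrix.sum_apply] using congrFun₂ S.A_sum x y

theorem exists_A_apply_eq_one_of_pair (x y : V) : ∃ m, S.A m x y = 1 := by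
  by_contra! h
  have := S.sum_A_apply x y
  rw [sum_eq_zero fun i _ => (S.A_entries i x y).resolve_right (h i)] at this
  exact zero_ne_one this

theorem exists_A_apply_eq_one (m : Fin (d + 1)) : ∃ x y, S.A m x y = 1 := by
  by_contra! h
  exact S.A_ne m (Matrix.ext fun x y => (S.A_entries m x y).resolve_right (h x y))

variable {S} {x y : V} {m : Fin (d + 1)}

theorem A_apply_eq_zero_of_ne (hm : S.A m x y = 1) {j : Fin (d + 1)} (hj : j ≠ m) :
    S.A j x y = 0 := by
  have hrest : ∑ i ∈ univ.erase m, S.A i x y = 0 := by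
    linarith [S.sum_A_apply x y, add_sum_erase univ (fun i => S.A i x y) (mem_univ m)]
  exact (sum_eq_zero_iff_of_nonneg fun i _ => S.A_apply_nonneg i x y).1 hrest j
    (mem_erase.2 ⟨hj, mem_univ j⟩)

theorem sum_smul_A_apply (hm : S.A m x y = 1) (c : Fin (d + 1) → ℝ) :
    (∑ j, c j • S.A j) x y = c m := by
  rw [Matrix.sum_apply, sum_eq_single m fun j _ hj => by
    rw [Matrix.smul_apply, A_apply_eq_zero_of_ne hm hj, smul_zero]]
  · rw [Matrix.smul_apply, hm, smul_eq_mul, mul_one]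
  · simp

theorem apply_eq_zero_of_mem_span (hm : S.A m x y = 1) {s : Set (Fin (d + 1))} (hms : m ∉ s)
    {M : Matrix V V ℝ} (hM : M ∈ Submodule.span ℝ (S.A '' s)) : M x y = 0 := by
  induction hM using Submodule.span_induction with
  | mem _ hM =>
    obtain ⟨j, hj, rfl⟩ := hM
    exact A_apply_eq_zero_of_ne hm (ne_of_mem_of_not_mem hj hms)
  | zero => rfl
  | add _ _ _ _ hM hN => simp [hM, hN]
  | smul _ _ _ hM => simp [hM]

theorem Q_zero_apply (l : Fin (d + 1)) : S.Q 0 l = 1 := by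
  obtain ⟨x, y, hl⟩ := S.exists_A_apply_eq_one l
  have hn : (Fintype.card V : ℝ)⁻¹ ≠ 0 := by
    have : Nonempty V := ⟨x⟩
    positivity
  have h := congrFun₂ (S.E_zero.symm.trans (S.E_eq 0)) x y
  rw [Matrix.smul_apply, Matrix.smul_apply, Matrix.of_apply, sum_smul_A_apply hl] at h
  simpa [hn] using h.symm

variable (S)

theorem A_one_pow (k : ℕ) : S.A 1 ^ k = ∑ i, S.theta i ^ k • S.E i := by
  induction k with
  | zero => simp [S.E_sum]
  | succ k ih =>
    rw [pow_succ, ih, S.A_eq 1, sum_mul]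
    refine sum_congr rfl fun i _ => ?_
    rw [smul_mul_assoc, mul_sum, sum_eq_single i (fun j _ hj => by
      rw [mul_smul_comm, S.E_mul, if_neg (Ne.symm hj), smul_zero]) (by simp),
      mul_smul_comm, S.E_mul, if_pos rfl, smul_smul, pow_succ, theta]

theorem aeval_A_one (p : ℝ[X]) : aeval (S.A 1) p = ∑ i, p.eval (S.theta i) • S.E i := by
  simp only [aeval_eq_sum_range, A_one_pow, smul_sum, smul_smul, eval_eq_sum_range, sum_smul]
  exact sum_comm

/-- The coefficient of `A m` in `p(A 1)`. -/
noncomputable def polyCoeff (p : ℝ[X]) (m : Fin (d + 1)) : ℝ :=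
  (Fintype.card V : ℝ)⁻¹ * ∑ i, p.eval (S.theta i) * S.Q i m

theorem aeval_A_one_eq_sum (p : ℝ[X]) : aeval (S.A 1) p = ∑ m, S.polyCoeff p m • S.A m := by
  simp only [aeval_A_one, S.E_eq, smul_sum, smul_smul, polyCoeff, mul_sum]
  rw [sum_comm]
  refine sum_congr rfl fun m _ => ?_
  rw [sum_smul]
  exact sum_congr rfl fun i _ => by ring_nf

variable {S}

theorem aeval_A_one_apply (hm : S.A m x y = 1) (p : ℝ[X]) :
    aeval (S.A 1) p x y = S.polyCoeff p m := by
  rw [aeval_A_one_eq_sum, sum_smul_A_apply hm]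

theorem exists_aeval_A_one_eq_A (hθ : Function.Injective S.theta) (m : Fin (d + 1)) :
    ∃ p : ℝ[X], p.natDegree ≤ d ∧ aeval (S.A 1) p = S.A m := by
  refine ⟨Lagrange.interpolate univ S.theta (S.P m), ?_, ?_⟩
  · refine natDegree_le_of_degree_le ?_
    simpa using Lagrange.degree_interpolate_le (s := univ) (S.P m) hθ.injOn
  · rw [aeval_A_one, S.A_eq m]
    exact sum_congr rfl fun i _ => by
      rw [Lagrange.eval_interpolate_at_node _ hθ.injOn (mem_univ i)]

theorem forall_prod_eq_neg_Q_iff (hθ : Function.Injective S.theta) (l : Fin (d + 1)) :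
    (∀ i : Fin (d + 1), i ≠ 0 →
      (∏ j ∈ (univ.erase 0).erase i, (S.theta 0 - S.theta j) / (S.theta i - S.theta j)) =
        -S.Q i l) ↔
      ∀ p : ℝ[X], p.degree < d → S.polyCoeff p l = 0 := by
  have hn : (Fintype.card V : ℝ)⁻¹ ≠ 0 := by
    obtain ⟨x, -⟩ := S.exists_A_apply_eq_one l
    have : Nonempty V := ⟨x⟩
    positivity
  have key := Lagrange.forall_eval_basis_eq_neg_iff (c := (S.Q · l)) hθ (S.Q_zero_apply l)
  simp only [Lagrange.eval_basis_eq_prod] at key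
  simp only [polyCoeff, mul_eq_zero, hn, false_or]
  convert key using 4
  simp

theorem polyCoeff_last_eq_zero_of_degree_lt {ξ : Equiv.Perm (Fin (d + 1))}
    {v : Fin (d + 1) → ℝ[X]}
    (hv : ∀ i, (v i).natDegree = (i : ℕ) ∧ aeval (S.A 1) (v i) = S.A (ξ i))
    {p : ℝ[X]} (hp : p.degree < d) : S.polyCoeff p (ξ (Fin.last d)) = 0 := by
  have hdeg : ∀ i, (v i).degree = (i : ℕ) := fun i => by
    have hne : v i ≠ 0 := fun h => S.A_ne (ξ i) (by rw [← (hv i).2, h, map_zero])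
    rw [degree_eq_natDegree hne, (hv i).1]
  have hmem := Submodule.mem_map_of_mem (f := (aeval (S.A 1)).toLinearMap)
    (mem_span_image_of_degree_lt hdeg hp)
  have himage : (aeval (S.A 1)).toLinearMap ∘ v '' {i | (i : ℕ) < d} =
      S.A '' (ξ '' {i | (i : ℕ) < d}) := by
    rw [← Set.image_comp]
    exact Set.image_congr fun i _ => (hv i).2
  rw [Submodule.map_span, ← Set.image_comp, himage] at hmem
  obtain ⟨x, y, hlast⟩ := S.exists_A_apply_eq_one (ξ (Fin.last d))
  rw [← aeval_A_one_apply hlast]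
  refine apply_eq_zero_of_mem_span hlast ?_ hmem
  rintro ⟨i, hi, hξi⟩
  rw [ξ.injective hξi] at hi
  simp at hi

theorem A_one_add_one_apply_nonneg (x y : V) : 0 ≤ (S.A 1 + 1) x y := by
  rw [← S.A_zero, Matrix.add_apply]
  exact add_nonneg (S.A_apply_nonneg 1 x y) (S.A_apply_nonneg 0 x y)

theorem polyCoeff_X_add_one_pow (hm : S.A m x y = 1) (h : ℕ) :
    S.polyCoeff ((X + 1) ^ h) m = ((S.A 1 + 1) ^ h) x y := by
  simp [← aeval_A_one_apply hm]

theorem polyCoeff_X_add_one_pow_ne_zero_iff (hm : S.A m x y = 1) (h : ℕ) :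
    S.polyCoeff ((X + 1) ^ h) m ≠ 0 ↔ ∃ k ≤ h, (S.A 1 ^ k) x y ≠ 0 := by
  rw [polyCoeff_X_add_one_pow hm]
  exact Matrix.add_one_pow_apply_ne_zero_iff (S.A_apply_nonneg 1) h x y

theorem exists_A_one_pow_apply_ne_zero (hθ : Function.Injective S.theta) (hm : S.A m x y = 1) :
    ∃ k ≤ d, (S.A 1 ^ k) x y ≠ 0 := by
  obtain ⟨p, hpd, hpA⟩ := exists_aeval_A_one_eq_A hθ m
  by_contra! h0
  have hA := congrFun₂ hpA x y
  rw [hm, aeval_eq_sum_range, Matrix.sum_apply, sum_eq_zero fun k hk => by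
    rw [Matrix.smul_apply, h0 k (by simp at hk; omega), smul_zero]] at hA
  exact zero_ne_one hA

variable (S) in
-- The set is nonempty when the `θᵢ` are distinct (see `level_le_iff`); otherwise `sInf ∅ = 0`.
noncomputable def level (m : Fin (d + 1)) : ℕ :=
  sInf {h | S.polyCoeff ((X + 1) ^ h) m ≠ 0}

theorem level_le_iff (hθ : Function.Injective S.theta) (m : Fin (d + 1)) (h : ℕ) :
    S.level m ≤ h ↔ S.polyCoeff ((X + 1) ^ h) m ≠ 0 := by
  obtain ⟨x, y, hm⟩ := S.exists_A_apply_eq_one m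
  have hmono : ∀ {a b}, a ≤ b → S.polyCoeff ((X + 1) ^ a) m ≠ 0 →
      S.polyCoeff ((X + 1) ^ b) m ≠ 0 := fun hab => by
    simp only [polyCoeff_X_add_one_pow_ne_zero_iff hm]
    exact fun ⟨k, hk, hne⟩ => ⟨k, hk.trans hab, hne⟩
  have hd : S.polyCoeff ((X + 1) ^ d) m ≠ 0 :=
    (polyCoeff_X_add_one_pow_ne_zero_iff hm d).2 (exists_A_one_pow_apply_ne_zero hθ hm)
  exact ⟨fun hle => hmono hle (Nat.sInf_mem (s := {h | S.polyCoeff ((X + 1) ^ h) m ≠ 0}) ⟨d, hd⟩),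
    fun hne => Nat.sInf_le hne⟩

theorem level_le (hθ : Function.Injective S.theta) (m : Fin (d + 1)) : S.level m ≤ d := by
  obtain ⟨x, y, hm⟩ := S.exists_A_apply_eq_one m
  exact (level_le_iff hθ m d).2
    ((polyCoeff_X_add_one_pow_ne_zero_iff hm d).2 (exists_A_one_pow_apply_ne_zero hθ hm))

theorem level_zero : S.level 0 = 0 := by
  obtain ⟨x, y, h0⟩ := S.exists_A_apply_eq_one 0
  refine Nat.le_zero.1 (Nat.sInf_le ((polyCoeff_X_add_one_pow_ne_zero_iff h0 0).2 ?_))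
  exact ⟨0, le_rfl, by rw [pow_zero, ← S.A_zero, h0]; exact one_ne_zero⟩

theorem level_one (hθ : Function.Injective S.theta) : S.level 1 = (1 : Fin (d + 1)) := by
  rcases eq_or_ne (1 : Fin (d + 1)) 0 with h10 | h10
  · rw [h10]
    exact level_zero
  obtain ⟨x, y, h1⟩ := S.exists_A_apply_eq_one 1
  have hval : ((1 : Fin (d + 1)) : ℕ) = 1 := by
    rcases d with _ | d
    · exact (h10 rfl).elim
    · rfl
  rw [hval]
  refine le_antisymm ((level_le_iff hθ 1 1).2 ?_)
    (Nat.one_le_iff_ne_zero.2 fun h0 => ?_)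
  · rw [polyCoeff_X_add_one_pow_ne_zero_iff h1]
    exact ⟨1, le_rfl, by rw [pow_one, h1]; exact one_ne_zero⟩
  · obtain ⟨k, hk, hne⟩ := (polyCoeff_X_add_one_pow_ne_zero_iff h1 0).1
      ((level_le_iff hθ 1 0).1 h0.le)
    rw [Nat.le_zero.1 hk, pow_zero, ← S.A_zero, A_apply_eq_zero_of_ne h1 h10.symm] at hne
    exact hne rfl

theorem level_eq_of_forall_polyCoeff_eq_zero (hθ : Function.Injective S.theta) {l : Fin (d + 1)}
    (hl : ∀ p : ℝ[X], p.degree < d → S.polyCoeff p l = 0) : S.level l = d := by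
  refine le_antisymm (level_le hθ l) (not_lt.1 fun hlt => ?_)
  refine (level_le_iff hθ l _).1 le_rfl (hl _ ?_)
  have : ((X + 1 : ℝ[X]) ^ S.level l).degree = S.level l := by compute_degree!
  rw [this]
  exact_mod_cast hlt

theorem exists_level_eq_of_le_level (hθ : Function.Injective S.theta) {m : Fin (d + 1)} {k : ℕ}
    (hk : k ≤ S.level m) : ∃ m', S.level m' = k := by
  have hiff : ∀ m h, ¬S.polyCoeff ((X + 1) ^ h) m = 0 ↔ S.level m ≤ h :=
    fun m h => (level_le_iff hθ m h).symm
  by_contra! hgap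
  obtain _ | h := k
  · exact hgap 0 level_zero
  -- With no relation of level `h + 1`, the zero pattern stops growing after step `h`.
  have hstable : ∀ x y, ((S.A 1 + 1) ^ (h + 1)) x y = 0 ↔ ((S.A 1 + 1) ^ h) x y = 0 := by
    intro x y
    obtain ⟨m', hm'⟩ := S.exists_A_apply_eq_one_of_pair x y
    rw [← polyCoeff_X_add_one_pow hm', ← polyCoeff_X_add_one_pow hm', ← not_iff_not, hiff, hiff]
    have := hgap m'
    omega
  obtain ⟨x, y, hm⟩ := S.exists_A_apply_eq_one m
  have hlevel := (hiff m (S.level m)).2 le_rfl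
  rw [polyCoeff_X_add_one_pow hm, ← Nat.add_sub_cancel' (by omega : h ≤ S.level m),
    Matrix.pow_add_apply_eq_zero_iff_of_stable A_one_add_one_apply_nonneg hstable,
    ← polyCoeff_X_add_one_pow hm, hiff] at hlevel
  omega

theorem level_injective (hθ : Function.Injective S.theta) {l : Fin (d + 1)}
    (hl : S.level l = d) : Function.Injective S.level := by
  have hsub : range (d + 1) ⊆ univ.image S.level := fun k hk => by
    obtain ⟨m, hm⟩ := exists_level_eq_of_le_level hθ (hl ▸ Nat.lt_succ_iff.1 (mem_range.1 hk))
    exact mem_image.2 ⟨m, mem_univ m, hm⟩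
  have hcard : #(univ.image S.level) = #(univ : Finset (Fin (d + 1))) :=
    le_antisymm card_image_le (by simpa using card_le_card hsub)
  simpa using card_image_iff.1 hcard

theorem exists_degree_eq_level (hθ : Function.Injective S.theta)
    (hinj : Function.Injective S.level) (m : Fin (d + 1)) :
    ∃ p : ℝ[X], p.degree = S.level m ∧ aeval (S.A 1) p = S.A m := by
  have hiff := level_le_iff hθ
  induction hh : S.level m using Nat.strong_induction_on generalizing m with
  | _ h ih =>
    set γ := fun j => S.polyCoeff ((X + 1) ^ h) j
    -- `m` is the only relation of level `h`, so in `(A₁ + I) ^ h = ∑ γ j • A j` every other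
    -- relation with `γ j ≠ 0` has smaller level and is already a polynomial of smaller degree.
    have hlower : ∑ j ∈ univ.erase m, γ j • S.A j ∈
        (degreeLT ℝ h).map (aeval (S.A 1)).toLinearMap := by
      refine Submodule.sum_mem _ fun j hj => ?_
      by_cases hγ : γ j = 0
      · simp [hγ]
      have hlt : S.level j < h := lt_of_le_of_ne ((hiff j h).2 hγ)
        fun e => (mem_erase.1 hj).1 (hinj (e.trans hh.symm))
      obtain ⟨q, hq, hqA⟩ := ih _ hlt j rfl
      exact Submodule.smul_mem _ _ ⟨q, mem_degreeLT.2 (by rw [hq]; exact_mod_cast hlt), hqA⟩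
    obtain ⟨r, hr, hrA⟩ := hlower
    rw [AlgHom.toLinearMap_apply] at hrA
    have hγm : γ m ≠ 0 := (hiff m h).1 hh.le
    have hdeg : ((X + 1 : ℝ[X]) ^ h).degree = h := by compute_degree!
    refine ⟨C (γ m)⁻¹ * ((X + 1) ^ h - r), ?_, ?_⟩
    · rw [degree_C_mul (inv_ne_zero hγm),
        degree_sub_eq_left_of_degree_lt (hdeg ▸ mem_degreeLT.1 hr), hdeg]
    · rw [map_mul, aeval_C, map_sub, hrA, aeval_A_one_eq_sum,
        ← add_sum_erase _ _ (mem_univ m), add_sub_cancel_right, Algebra.algebraMap_eq_smul_one,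
        smul_one_mul, smul_smul, inv_mul_cancel₀ hγm, one_smul]

theorem exists_pPoly_ordering (hθ : Function.Injective S.theta) {l : Fin (d + 1)}
    (hl : ∀ p : ℝ[X], p.degree < d → S.polyCoeff p l = 0) :
    ∃ ξ : Equiv.Perm (Fin (d + 1)), ξ 0 = 0 ∧ ξ 1 = 1 ∧ ξ (Fin.last d) = l ∧
      ∃ v : Fin (d + 1) → Polynomial ℝ,
        ∀ i, (v i).natDegree = (i : ℕ) ∧ Polynomial.aeval (S.A 1) (v i) = S.A (ξ i) := by
  have hlast := level_eq_of_forall_polyCoeff_eq_zero hθ hl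
  have hinj := level_injective hθ hlast
  let ℓ : Fin (d + 1) → Fin (d + 1) := fun m => ⟨S.level m, Nat.lt_succ_of_le (level_le hθ m)⟩
  have hℓ : Function.Bijective ℓ :=
    Finite.injective_iff_bijective.1 fun a b hab => hinj (Fin.mk.inj hab)
  let ξ := (Equiv.ofBijective ℓ hℓ).symm
  have hξ : ∀ i m, ξ i = m ↔ S.level m = i := fun i m => by
    rw [Equiv.symm_apply_eq, Equiv.ofBijective_apply, Fin.ext_iff, eq_comm]
  choose v hv using fun i => exists_degree_eq_level hθ hinj (ξ i)
  refine ⟨ξ, (hξ 0 0).2 level_zero, (hξ 1 1).2 (level_one hθ), (hξ _ l).2 hlast, v,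
    fun i => ⟨natDegree_eq_of_degree_eq_some ?_, (hv i).2⟩⟩
  rw [(hv i).1, (hξ i (ξ i)).1 rfl]

end AssocScheme

theorem stmt11_general {V : Type*} [Fintype V] [DecidableEq V] {d : ℕ} (S : AssocScheme V d)
    (hθ : Function.Injective S.theta) :
    (S.IsPPolyWrtA1 ↔
        ∃ l : Fin (d + 1), ∀ i : Fin (d + 1), i ≠ 0 →
          (∏ j ∈ (Finset.univ.erase 0).erase i,
            (S.theta 0 - S.theta j) / (S.theta i - S.theta j)) = - S.Q i l) ∧
      ∀ l : Fin (d + 1),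
        (∀ i : Fin (d + 1), i ≠ 0 →
          (∏ j ∈ (Finset.univ.erase 0).erase i,
            (S.theta 0 - S.theta j) / (S.theta i - S.theta j)) = - S.Q i l) →
        ∃ ξ : Equiv.Perm (Fin (d + 1)), ξ 0 = 0 ∧ ξ 1 = 1 ∧ ξ (Fin.last d) = l ∧
          ∃ v : Fin (d + 1) → Polynomial ℝ,
            ∀ i, (v i).natDegree = (i : ℕ) ∧ Polynomial.aeval (S.A 1) (v i) = S.A (ξ i) := by
  simp only [AssocScheme.forall_prod_eq_neg_Q_iff hθ]
  refine ⟨⟨fun ⟨ξ, _, _, v, hv⟩ => ⟨ξ (Fin.last d), fun _ =>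
    AssocScheme.polyCoeff_last_eq_zero_of_degree_lt hv⟩, fun ⟨l, hl⟩ => ?_⟩,
    fun l hl => AssocScheme.exists_pPoly_ordering hθ hl⟩
  obtain ⟨ξ, h0, h1, -, v, hv⟩ := AssocScheme.exists_pPoly_ordering hθ hl
  exact ⟨ξ, h0, h1, v, hv⟩

/-- Theorem 1.1: a symmetric association scheme with pairwise distinct `θ_i` is
P-polynomial with respect to `A 1` iff there exists `l` with
`∏_{j=1, j≠i}^d (θ₀ − θ_j)/(θ_i − θ_j) = − Q_i(l)` for all `i ∈ {1,…,d}`; moreover,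
any such `l` is the last index in the P-polynomial ordering. -/
theorem stmt11 {V : Type*} [Fintype V] [DecidableEq V] {d : ℕ} (S : AssocScheme V d)
    (hd : 1 ≤ d) (hθ : Function.Injective S.theta) :
    (S.IsPPolyWrtA1 ↔
        ∃ l : Fin (d + 1), ∀ i : Fin (d + 1), i ≠ 0 →
          (∏ j ∈ (Finset.univ.erase 0).erase i,
            (S.theta 0 - S.theta j) / (S.theta i - S.theta j)) = - S.Q i l) ∧
      ∀ l : Fin (d + 1),
        (∀ i : Fin (d + 1), i ≠ 0 →
          (∏ j ∈ (Finset.univ.erase 0).erase i,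
            (S.theta 0 - S.theta j) / (S.theta i - S.theta j)) = - S.Q i l) →
        ∃ ξ : Equiv.Perm (Fin (d + 1)), ξ 0 = 0 ∧ ξ 1 = 1 ∧ ξ (Fin.last d) = l ∧
          ∃ v : Fin (d + 1) → Polynomial ℝ,
            ∀ i, (v i).natDegree = (i : ℕ) ∧ Polynomial.aeval (S.A 1) (v i) = S.A (ξ i) :=
  stmt11_general S hθ
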